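/- The revised call-by-need λ-calculus satisfies a Curry–Feys-style standard reduction theorem: if a term e reduces (by ↠, arbitrary reductions in arbitrary contexts) to an answer, then the standard reduction sequence of e — which always contracts the redex occurring in the hole of an evaluation context — also reaches an answer. -/

import Mathlib

namespace NeedCalc

/-- Terms of the pure λ-calculus, in de Bruijn representation (so that
    α-equivalent terms are syntactically equal). -/
inductive Tm : Type
  | bvar : Nat → Tm
  | lam  : Tm → Tm
  | app  : Tm → Tm → Tm
deriving DecidableEq

namespace Tm

/-- Shift the free de Bruijn indices ≥ k up by n. -/
def lift (n : Nat) : Nat → Tm → Tm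
  | k, .bvar i => if i < k then .bvar i else .bvar (i + n)
  | k, .lam b => .lam (lift n (k+1) b)
  | k, .app f a => .app (lift n k f) (lift n k a)

/-- Capture-avoiding substitution of `s` for the de Bruijn index `k`. -/
def subst : Tm → Nat → Tm → Tm
  | .bvar i, k, s => if i = k then lift k 0 s else if k < i then .bvar (i-1) else .bvar i
  | .lam b, k, s => .lam (subst b (k+1) s)
  | .app f a, k, s => .app (subst f k s) (subst a k s)

end Tm

/-- Values V ::= λx.e. -/
def IsValT (t : Tm) : Prop := ∃ b, t = Tm.lam b

/-- Answers A ::= V | ((λx.A) e). -/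
inductive IsAnswer : Tm → Prop
  | lam (b : Tm) : IsAnswer (.lam b)
  | app {a : Tm} (e : Tm) : IsAnswer a → IsAnswer (.app (.lam a) e)

/-- Evaluation contexts
    E ::= □ | (E e) | ((λx.E₁[x]) E) | ((λx.E) e).
    In `appNeed B E` the context `B` is the body context whose hole is
    filled with the variable bound by the λ (de Bruijn index `B.depth`),
    and the overall hole is in the argument context `E`. -/
inductive ECtx : Type
  | hole    : ECtx
  | appL    : ECtx → Tm → ECtx
  | appNeed : ECtx → ECtx → ECtx
  | appBody : ECtx → Tm → ECtx

/-- Number of λ-binders crossed between the root of the context and its hole. -/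
def ECtx.depth : ECtx → Nat
  | .hole => 0
  | .appL E _ => E.depth
  | .appNeed _ E => E.depth
  | .appBody E _ => E.depth + 1

/-- Plugging a term into the hole of an evaluation context. -/
def ECtx.plug : ECtx → Tm → Tm
  | .hole, t => t
  | .appL E e, t => .app (E.plug t) e
  | .appNeed B E, t => .app (.lam (B.plug (.bvar B.depth))) (E.plug t)
  | .appBody E e, t => .app (.lam (E.plug t)) e

/-- The notions of reduction of the revised call-by-need λ-calculus:
    β_need, lift, and assoc. -/
inductive Redn : Tm → Tm → Prop
  | beta (E : ECtx) (b : Tm) :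
      Redn (.app (.lam (E.plug (.bvar E.depth))) (.lam b))
           (Tm.subst (E.plug (.bvar E.depth)) 0 (.lam b))
  | liftR {a : Tm} (e e' : Tm) : IsAnswer a →
      Redn (.app (.app (.lam a) e) e')
           (.app (.lam (.app a (Tm.lift 1 0 e'))) e)
  | assoc (E : ECtx) {a : Tm} (e : Tm) : IsAnswer a →
      Redn (.app (.lam (E.plug (.bvar E.depth))) (.app (.lam a) e))
           (.app (.lam (.app (Tm.lift 1 0 (.lam (E.plug (.bvar E.depth)))) a)) e)

/-- One-step reduction: the compatible (contextual) closure of the notions of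
    reduction. -/
inductive Red1 : Tm → Tm → Prop
  | base {t t' : Tm} : Redn t t' → Red1 t t'
  | lam {b b' : Tm} : Red1 b b' → Red1 (.lam b) (.lam b')
  | appL {f f' : Tm} (a : Tm) : Red1 f f' → Red1 (.app f a) (.app f' a)
  | appR (f : Tm) {a a' : Tm} : Red1 a a' → Red1 (.app f a) (.app f a')

/-- Reflexive-transitive closure of one-step reduction. -/
def Reds : Tm → Tm → Prop := Relation.ReflTransGen Red1

/-- Standard reduction: contract only the redex in the hole of an evaluation
    context. -/
inductive StdStep : Tm → Tm → Prop
  | mk (E : ECtx) (r r' : Tm) : Redn r r' → StdStep (E.plug r) (E.plug r')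

end NeedCalc

/-!
Takahashi's method. A weighted parallel reduction `ParN` contains one-step reduction, and a
parallel step followed by a standard step can be rearranged into standard steps followed by a
parallel step; a parallel step into an answer is likewise preceded by standard steps reaching an
answer. Both rearrangements rest on one observation: all three notions of reduction contract
standard redexes, so a parallel step that contracts a redex at the root is that standard step
followed by a parallel step of smaller weight. Pushing each one-step reduction of `e ↠ a` through
the standard reduction sequence that follows it then yields the theorem.
-/

namespace NeedCalc

namespace Tm

def occ (j : Nat) : Tm → Nat
  | .bvar i => if i = j then 1 else 0
  | .lam b => occ (j + 1) b
  | .app f a => occ j f + occ j a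

theorem lift_lift_add (t : Tm) {n m i j : Nat} (hij : i ≤ j) (hji : j ≤ i + m) :
    lift n j (lift m i t) = lift (m + n) i t := by
  induction t generalizing i j with
  | bvar x =>
    simp only [lift]
    split_ifs <;> simp only [lift] <;> split_ifs <;> simp only [bvar.injEq] <;> omega
  | lam b ih => simp only [lift, ih (Nat.succ_le_succ hij) (by omega)]
  | app f a ihf iha => simp only [lift, ihf hij hji, iha hij hji]

theorem lift_lift_comm (t : Tm) {n m i j : Nat} (hji : j ≤ i) :
    lift n j (lift m i t) = lift m (i + n) (lift n j t) := by
  induction t generalizing i j with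
  | bvar x =>
    simp only [lift]
    split_ifs <;> simp only [lift] <;> split_ifs <;> simp only [bvar.injEq] <;> omega
  | lam b ih => simp only [lift, ih (Nat.succ_le_succ hji), Nat.add_right_comm i 1 n]
  | app f a ihf iha => simp only [lift, ihf hji, iha hji]

theorem subst_lift_of_le (t u : Tm) {n k j : Nat} (hkj : k ≤ j) :
    subst (lift n k t) (j + n) u = lift n k (subst t j u) := by
  induction t generalizing k j with
  | bvar x =>
    have hu : lift n k (lift j 0 u) = lift (j + n) 0 u :=
      lift_lift_add u (Nat.zero_le k) (by omega)
    simp only [lift, subst]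
    split_ifs <;> simp only [lift, subst] <;> split_ifs
    all_goals first | omega | exact hu.symm | (simp only [bvar.injEq] <;> omega)
  | lam b ih => simp only [lift, subst, ← ih (Nat.succ_le_succ hkj), Nat.add_right_comm j 1 n]
  | app f a ihf iha => simp only [lift, subst, ihf hkj, iha hkj]

theorem lift_subst (t u : Tm) (n i k : Nat) :
    lift n (i + k) (subst t i u) = subst (lift n (i + k + 1) t) i (lift n k u) := by
  induction t generalizing i with
  | bvar x =>
    have hu : lift n (i + k) (lift i 0 u) = lift i 0 (lift n k u) := by
      rw [lift_lift_comm u (Nat.zero_le k), Nat.add_comm k i]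
    simp only [lift, subst]
    split_ifs <;> simp only [lift, subst] <;> split_ifs
    all_goals first | omega | exact hu | (simp only [bvar.injEq] <;> omega)
  | lam b ih => simp only [lift, subst]; rw [Nat.add_right_comm i k 1, ih]
  | app f a ihf iha => simp only [lift, subst, ihf, iha]

theorem subst_lift_succ (t u : Tm) {n k i : Nat} (hki : k ≤ i) (hik : i ≤ k + n) :
    subst (lift (n + 1) k t) i u = lift n k t := by
  induction t generalizing k i with
  | bvar x =>
    simp only [lift]
    split_ifs <;> simp only [subst] <;> split_ifs
    all_goals first | omega | (simp only [bvar.injEq] <;> omega)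
  | lam b ih => simp only [lift, subst, ih (Nat.succ_le_succ hki) (by omega)]
  | app f a ihf iha => simp only [lift, subst, ihf hki hik, iha hki hik]

theorem subst_subst (t u v : Tm) (i k : Nat) :
    subst (subst t i u) (i + k) v = subst (subst t (i + k + 1) v) i (subst u k v) := by
  induction t generalizing i with
  | bvar x =>
    have hu : subst (lift i 0 u) (i + k) v = lift i 0 (subst u k v) := by
      rw [← subst_lift_of_le u v (Nat.zero_le k), Nat.add_comm k i]
    have hv : lift (i + k) 0 v = subst (lift (i + k + 1) 0 v) i (subst u k v) :=
      (subst_lift_succ v _ (Nat.zero_le i) (by omega)).symm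
    simp only [subst]
    split_ifs <;> (try simp only [subst]) <;> (try split_ifs)
    all_goals first | omega | exact hu | exact hv | rfl
  | lam b ih => simp only [subst]; rw [Nat.add_right_comm i k 1, ih]
  | app f a ihf iha => simp only [subst, ihf, iha]

theorem occ_lift_of_lt (t : Tm) {n k j : Nat} (hjk : j < k) : occ j (lift n k t) = occ j t := by
  induction t generalizing k j with
  | bvar x => simp only [lift, apply_ite (occ _), occ]; split_ifs <;> omega
  | lam b ih => simp only [lift, occ, ih (Nat.succ_lt_succ hjk)]
  | app f a ihf iha => simp only [lift, occ, ihf hjk, iha hjk]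

theorem occ_lift_eq_zero (t : Tm) {n k j : Nat} (hkj : k ≤ j) (hjk : j < k + n) :
    occ j (lift n k t) = 0 := by
  induction t generalizing k j with
  | bvar x => simp only [lift, apply_ite (occ _), occ]; split_ifs <;> omega
  | lam b ih => simp only [lift, occ, ih (Nat.succ_le_succ hkj) (by omega)]
  | app f a ihf iha => simp only [lift, occ, ihf hkj hjk, iha hkj hjk]

theorem occ_lift_add (t : Tm) {n k j : Nat} (hkj : k ≤ j) :
    occ (j + n) (lift n k t) = occ j t := by
  induction t generalizing k j with
  | bvar x => simp only [lift, apply_ite (occ _), occ]; split_ifs <;> omega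
  | lam b ih => simp only [lift, occ, Nat.add_right_comm j n 1, ih (Nat.succ_le_succ hkj)]
  | app f a ihf iha => simp only [lift, occ, ihf hkj, iha hkj]

theorem occ_subst_of_lt (t u : Tm) {i j : Nat} (hji : j < i) : occ j (subst t i u) = occ j t := by
  induction t generalizing i j with
  | bvar x =>
    have hu : occ j (lift i 0 u) = 0 := occ_lift_eq_zero u (Nat.zero_le j) (by omega)
    simp only [subst]
    split_ifs <;> simp only [occ, hu] <;> split_ifs <;> omega
  | lam b ih => simp only [subst, occ, ih (Nat.succ_lt_succ hji)]
  | app f a ihf iha => simp only [subst, occ, ihf hji, iha hji]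

theorem occ_subst (t u : Tm) (i k : Nat) :
    occ (i + k) (subst t i u) = occ (i + k + 1) t + occ i t * occ k u := by
  induction t generalizing i with
  | bvar x =>
    have hu : occ (i + k) (lift i 0 u) = occ k u := by
      rw [Nat.add_comm i k]; exact occ_lift_add u (Nat.zero_le k)
    simp only [subst]
    split_ifs <;> simp only [occ, hu] <;> split_ifs <;> omega
  | lam b ih => simp only [subst, occ]; rw [Nat.add_right_comm i k 1, ih]
  | app f a ihf iha => simp only [subst, occ, ihf, iha]; ring

end Tm

namespace ECtx

def lift (n : Nat) : Nat → ECtx → ECtx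
  | _, hole => hole
  | k, appL E e => appL (lift n k E) (Tm.lift n k e)
  | k, appNeed B E => appNeed (lift n (k + 1) B) (lift n k E)
  | k, appBody E e => appBody (lift n (k + 1) E) (Tm.lift n k e)

def subst (u : Tm) : Nat → ECtx → ECtx
  | _, hole => hole
  | k, appL E e => appL (subst u k E) (Tm.subst e k u)
  | k, appNeed B E => appNeed (subst u (k + 1) B) (subst u k E)
  | k, appBody E e => appBody (subst u (k + 1) E) (Tm.subst e k u)

def comp : ECtx → ECtx → ECtx
  | hole, D => D
  | appL E e, D => appL (comp E D) e
  | appNeed B E, D => appNeed B (comp E D)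
  | appBody E e, D => appBody (comp E D) e

@[simp] theorem depth_lift (E : ECtx) (n k : Nat) : (E.lift n k).depth = E.depth := by
  induction E generalizing k <;> simp only [lift, depth, *]

@[simp] theorem depth_subst (E : ECtx) (u : Tm) (k : Nat) : (E.subst u k).depth = E.depth := by
  induction E generalizing k <;> simp only [subst, depth, *]

theorem lift_plug (E : ECtx) (t : Tm) (n k : Nat) :
    Tm.lift n k (E.plug t) = (E.lift n k).plug (Tm.lift n (k + E.depth) t) := by
  induction E generalizing k t with
  | hole => rfl
  | appL E e ih => simp only [plug, lift, depth, Tm.lift, ih]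
  | appNeed B E ihB ihE =>
    simp only [plug, lift, depth, Tm.lift, ihB, ihE, depth_lift]
    rw [if_pos (by omega)]
  | appBody E e ih =>
    simp only [plug, lift, depth, Tm.lift, ih, Nat.add_right_comm k 1, Nat.add_assoc]

theorem subst_plug (E : ECtx) (t u : Tm) (k : Nat) :
    Tm.subst (E.plug t) k u = (E.subst u k).plug (Tm.subst t (k + E.depth) u) := by
  induction E generalizing k t with
  | hole => rfl
  | appL E e ih => simp only [plug, subst, depth, Tm.subst, ih]
  | appNeed B E ihB ihE =>
    simp only [plug, subst, depth, Tm.subst, ihB, ihE, depth_subst]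
    rw [if_neg (by omega), if_neg (by omega)]
  | appBody E e ih =>
    simp only [plug, subst, depth, Tm.subst, ih, Nat.add_right_comm k 1, Nat.add_assoc]

theorem comp_plug (C D : ECtx) (t : Tm) : (C.comp D).plug t = C.plug (D.plug t) := by
  induction C <;> simp only [comp, plug, *]

end ECtx

/-- `Needed t` says that `t` is `E[x]` for the variable `x` bound just outside `t`, i.e. the
body of a `β_need` or `assoc` redex. -/
def Needed (t : Tm) : Prop := ∃ E : ECtx, t = E.plug (.bvar E.depth)

theorem Needed.lift {t : Tm} (h : Needed t) (n k : Nat) : Needed (Tm.lift n (k + 1) t) := by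
  obtain ⟨E, rfl⟩ := h
  refine ⟨E.lift n (k + 1), ?_⟩
  rw [E.lift_plug, Tm.lift, if_pos (by omega), ECtx.depth_lift]

theorem Needed.subst {t : Tm} (h : Needed t) (u : Tm) (k : Nat) :
    Needed (Tm.subst t (k + 1) u) := by
  obtain ⟨E, rfl⟩ := h
  refine ⟨E.subst u (k + 1), ?_⟩
  rw [E.subst_plug, Tm.subst, if_neg (by omega), if_neg (by omega), ECtx.depth_subst]

theorem IsAnswer.lift {t : Tm} (h : IsAnswer t) (n k : Nat) : IsAnswer (Tm.lift n k t) := by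
  induction h generalizing k with
  | lam b => exact .lam _
  | app e _ ih => exact .app _ (ih (k + 1))

theorem IsAnswer.subst {t : Tm} (h : IsAnswer t) (u : Tm) (k : Nat) :
    IsAnswer (Tm.subst t k u) := by
  induction h generalizing k with
  | lam b => exact .lam _
  | app e _ ih => exact .app _ (ih (k + 1))

abbrev StdSteps : Tm → Tm → Prop := Relation.ReflTransGen StdStep

theorem StdStep.plug (C : ECtx) {t t' : Tm} (h : StdStep t t') :
    StdStep (C.plug t) (C.plug t') := by
  obtain ⟨E, r, r', hr⟩ := h
  simpa only [ECtx.comp_plug] using StdStep.mk (C.comp E) r r' hr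

theorem StdStep.of_redn {r r' : Tm} (h : Redn r r') : StdStep r r' := .mk .hole r r' h

theorem StdSteps.plug (C : ECtx) {t t' : Tm} (h : StdSteps t t') :
    StdSteps (C.plug t) (C.plug t') :=
  Relation.ReflTransGen.lift C.plug (fun _ _ => StdStep.plug C) _ _ h

theorem StdSteps.appL {t t' : Tm} (e : Tm) (h : StdSteps t t') :
    StdSteps (.app t e) (.app t' e) :=
  h.plug (.appL .hole e)

theorem StdSteps.appBody {t t' : Tm} (e : Tm) (h : StdSteps t t') :
    StdSteps (.app (.lam t) e) (.app (.lam t') e) :=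
  h.plug (.appBody .hole e)

theorem StdSteps.appNeed (B : ECtx) {t t' : Tm} (h : StdSteps t t') :
    StdSteps (.app (.lam (B.plug (.bvar B.depth))) t) (.app (.lam (B.plug (.bvar B.depth))) t') :=
  h.plug (.appNeed B .hole)

/-- Parallel reduction, with a weight that decreases when a root redex is contracted by a standard
step: each redex rule weighs more than the structural rules left behind by contracting it, and
`beta` charges for every copy of its argument. -/
inductive ParN : Nat → Tm → Tm → Prop
  | bvar (i : Nat) : ParN 0 (.bvar i) (.bvar i)
  | lam {s : Nat} {b b' : Tm} : ParN s b b' → ParN (s + 1) (.lam b) (.lam b')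
  | app {s₁ s₂ : Nat} {f f' a a' : Tm} : ParN s₁ f f' → ParN s₂ a a' →
      ParN (s₁ + s₂ + 1) (.app f a) (.app f' a')
  | beta {s₁ s₂ : Nat} {body body' b b' : Tm} : Needed body →
      ParN s₁ body body' → ParN s₂ b b' →
      ParN (s₁ + Tm.occ 0 body' * (s₂ + 1) + 1)
        (.app (.lam body) (.lam b)) (Tm.subst body' 0 (.lam b'))
  | liftR {s₁ s₂ s₃ : Nat} {a a' e₁ e₁' e₂ e₂' : Tm} : IsAnswer a →
      ParN s₁ a a' → ParN s₂ e₁ e₁' → ParN s₃ e₂ e₂' →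
      ParN (s₁ + s₂ + s₃ + 4) (.app (.app (.lam a) e₁) e₂)
        (.app (.lam (.app a' (Tm.lift 1 0 e₂'))) e₁')
  | assoc {s₁ s₂ s₃ : Nat} {body body' a a' e e' : Tm} : Needed body → IsAnswer a →
      ParN s₁ body body' → ParN s₂ a a' → ParN s₃ e e' →
      ParN (s₁ + s₂ + s₃ + 5) (.app (.lam body) (.app (.lam a) e))
        (.app (.lam (.app (Tm.lift 1 0 (.lam body')) a')) e')

def Par (t t' : Tm) : Prop := ∃ s, ParN s t t'

theorem Par.lam {b b' : Tm} (h : Par b b') : Par (.lam b) (.lam b') :=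
  let ⟨_, h⟩ := h; ⟨_, .lam h⟩

theorem Par.app {f f' a a' : Tm} (hf : Par f f') (ha : Par a a') : Par (.app f a) (.app f' a') :=
  let ⟨_, hf⟩ := hf; let ⟨_, ha⟩ := ha; ⟨_, .app hf ha⟩

theorem Par.refl (t : Tm) : Par t t := by
  induction t with
  | bvar i => exact ⟨0, .bvar i⟩
  | lam b ih => exact ih.lam
  | app f a ihf iha => exact ihf.app iha

theorem Red1.par {t t' : Tm} (h : Red1 t t') : Par t t' := by
  induction h with
  | base hr =>
    cases hr with
    | beta E b =>
      obtain ⟨_, h₁⟩ := Par.refl (E.plug (.bvar E.depth))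
      obtain ⟨_, h₂⟩ := Par.refl b
      exact ⟨_, .beta ⟨E, rfl⟩ h₁ h₂⟩
    | @liftR a e e' ha =>
      obtain ⟨_, h₁⟩ := Par.refl a
      obtain ⟨_, h₂⟩ := Par.refl e
      obtain ⟨_, h₃⟩ := Par.refl e'
      exact ⟨_, .liftR ha h₁ h₂ h₃⟩
    | @assoc E a e ha =>
      obtain ⟨_, h₁⟩ := Par.refl (E.plug (.bvar E.depth))
      obtain ⟨_, h₂⟩ := Par.refl a
      obtain ⟨_, h₃⟩ := Par.refl e
      exact ⟨_, .assoc ⟨E, rfl⟩ ha h₁ h₂ h₃⟩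
  | lam _ ih => exact ih.lam
  | appL a _ ih => exact ih.app (.refl a)
  | appR f _ ih => exact (Par.refl f).app ih

theorem ParN.lift {s : Nat} {t t' : Tm} (h : ParN s t t') (n k : Nat) :
    ParN s (Tm.lift n k t) (Tm.lift n k t') := by
  induction h generalizing k with
  | bvar i => simp only [Tm.lift]; split_ifs <;> exact .bvar _
  | lam _ ih => exact .lam (ih (k + 1))
  | app _ _ ih₁ ih₂ => exact .app (ih₁ k) (ih₂ k)
  | @beta _ _ _ body' _ b' hN _ _ ih₁ ih₂ =>
    have h := ParN.beta (hN.lift n k) (ih₁ (k + 1)) (ih₂ (k + 1))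
    have hs := Tm.lift_subst body' (.lam b') n 0 k
    rw [Nat.zero_add] at hs
    rw [Tm.occ_lift_of_lt body' (Nat.zero_lt_succ k)] at h
    simp only [Tm.lift] at hs h ⊢
    rwa [hs]
  | @liftR _ _ _ _ _ _ _ _ e₂' hA _ _ _ ih₁ ih₂ ih₃ =>
    have h := ParN.liftR (hA.lift n (k + 1)) (ih₁ (k + 1)) (ih₂ k) (ih₃ k)
    rw [Tm.lift_lift_comm e₂' (Nat.zero_le k)] at h
    simpa only [Tm.lift] using h
  | @assoc _ _ _ _ body' _ _ _ _ hN hA _ _ _ ih₁ ih₂ ih₃ =>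
    have h := ParN.assoc (hN.lift n k) (hA.lift n (k + 1)) (ih₁ (k + 1)) (ih₂ (k + 1)) (ih₃ k)
    simp only [Tm.lift] at h ⊢
    rwa [Tm.lift_lift_comm body' (Nat.le_add_left 1 k)] at h

theorem ParN.subst {s w : Nat} {e e' u u' : Tm} (he : ParN s e e') (hu : ParN w u u') (j : Nat) :
    ∃ m ≤ s + Tm.occ j e' * w, ParN m (Tm.subst e j u) (Tm.subst e' j u') := by
  induction he generalizing j with
  | bvar i =>
    simp only [Tm.subst, Tm.occ]
    split_ifs with hij
    · subst hij; exact ⟨w, by omega, hu.lift i 0⟩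
    all_goals exact ⟨0, by omega, .bvar _⟩
  | lam _ ih =>
    obtain ⟨m, hm, h⟩ := ih (j + 1)
    exact ⟨m + 1, by simp only [Tm.occ]; omega, .lam h⟩
  | app _ _ ih₁ ih₂ =>
    obtain ⟨m₁, hm₁, h₁⟩ := ih₁ j
    obtain ⟨m₂, hm₂, h₂⟩ := ih₂ j
    refine ⟨m₁ + m₂ + 1, ?_, .app h₁ h₂⟩
    simp only [Tm.occ, Nat.add_mul]
    omega
  | @beta _ _ _ body' _ b' hN _ _ ih₁ ih₂ =>
    obtain ⟨m₁, hm₁, h₁⟩ := ih₁ (j + 1)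
    obtain ⟨m₂, hm₂, h₂⟩ := ih₂ (j + 1)
    have h := ParN.beta (hN.subst u j) h₁ h₂
    rw [Tm.occ_subst_of_lt body' u' (Nat.zero_lt_succ j)] at h
    have hs := Tm.subst_subst body' (.lam b') u' 0 j
    have hocc := Tm.occ_subst body' (.lam b') 0 j
    simp only [Nat.zero_add, Tm.subst, Tm.occ] at hs hocc h ⊢
    refine ⟨_, ?_, hs ▸ h⟩
    rw [hocc]
    have := Nat.mul_le_mul_left (Tm.occ 0 body') (Nat.add_le_add_right hm₂ 1)
    nlinarith
  | @liftR _ _ _ _ _ _ _ _ e₂' hA _ _ _ ih₁ ih₂ ih₃ =>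
    obtain ⟨m₁, hm₁, h₁⟩ := ih₁ (j + 1)
    obtain ⟨m₂, hm₂, h₂⟩ := ih₂ j
    obtain ⟨m₃, hm₃, h₃⟩ := ih₃ j
    refine ⟨m₁ + m₂ + m₃ + 4, ?_, ?_⟩
    · simp only [Tm.occ, Tm.occ_lift_add e₂' (Nat.zero_le j), Nat.add_mul]
      omega
    · simp only [Tm.subst, Tm.subst_lift_of_le e₂' u' (Nat.zero_le j)]
      exact .liftR (hA.subst u (j + 1)) h₁ h₂ h₃
  | @assoc _ _ _ _ body' _ _ _ _ hN hA _ _ _ ih₁ ih₂ ih₃ =>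
    obtain ⟨m₁, hm₁, h₁⟩ := ih₁ (j + 1)
    obtain ⟨m₂, hm₂, h₂⟩ := ih₂ (j + 1)
    obtain ⟨m₃, hm₃, h₃⟩ := ih₃ j
    refine ⟨m₁ + m₂ + m₃ + 5, ?_, ?_⟩
    · simp only [Tm.occ, Tm.occ_lift_add _ (Nat.zero_le j), Nat.add_mul]
      omega
    · simp only [Tm.subst, Tm.subst_lift_of_le (.lam body') u' (Nat.zero_le j)]
      exact .assoc (hN.subst u j) (hA.subst u (j + 1)) h₁ h₂ h₃

theorem Par.lift {t t' : Tm} (h : Par t t') (n k : Nat) : Par (Tm.lift n k t) (Tm.lift n k t') :=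
  let ⟨_, h⟩ := h; ⟨_, h.lift n k⟩

inductive InternalParN : Nat → Tm → Tm → Prop
  | bvar (i : Nat) : InternalParN 0 (.bvar i) (.bvar i)
  | lam {s : Nat} {b b' : Tm} : ParN s b b' → InternalParN (s + 1) (.lam b) (.lam b')
  | app {s₁ s₂ : Nat} {f f' a a' : Tm} : ParN s₁ f f' → ParN s₂ a a' →
      InternalParN (s₁ + s₂ + 1) (.app f a) (.app f' a')

theorem ParN.exists_stdSteps_internal {s : Nat} {e T : Tm} (h : ParN s e T) :
    ∃ e₀ m, StdSteps e e₀ ∧ InternalParN m e₀ T ∧ m ≤ s := by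
  induction s using Nat.strong_induction_on generalizing e T with
  | _ s ih =>
  have prepend : ∀ {e'}, StdStep e e' → ∀ m < s, ParN m e' T →
      ∃ e₀ m, StdSteps e e₀ ∧ InternalParN m e₀ T ∧ m ≤ s := by
    intro e' hst m hm h'
    obtain ⟨e₀, m₀, hs, hi, hle⟩ := ih m hm h'
    exact ⟨e₀, m₀, .head hst hs, hi, by omega⟩
  cases h with
  | bvar i => exact ⟨_, _, .refl, .bvar i, le_rfl⟩
  | lam h => exact ⟨_, _, .refl, .lam h, le_rfl⟩
  | app h₁ h₂ => exact ⟨_, _, .refl, .app h₁ h₂, le_rfl⟩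
  | beta hN h₁ h₂ =>
    obtain ⟨E, rfl⟩ := hN
    obtain ⟨m, hm, h⟩ := h₁.subst h₂.lam 0
    exact prepend (.of_redn (.beta E _)) m (by omega) h
  | liftR hA h₁ h₂ h₃ =>
    exact prepend (.of_redn (.liftR _ _ hA)) _ (by omega)
      (.app (.lam (.app h₁ (h₃.lift 1 0))) h₂)
  | assoc hN hA h₁ h₂ h₃ =>
    obtain ⟨E, rfl⟩ := hN
    exact prepend (.of_redn (.assoc E _ hA)) _ (by omega)
      (.app (.lam (.app (h₁.lam.lift 1 0) h₂)) h₃)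

theorem ParN.stdSteps_of_bvar {s i : Nat} {e : Tm} (h : ParN s e (.bvar i)) :
    StdSteps e (.bvar i) := by
  obtain ⟨_, _, hs, hi, -⟩ := h.exists_stdSteps_internal
  cases hi
  exact hs

theorem ParN.exists_stdSteps_lam {s : Nat} {e b' : Tm} (h : ParN s e (.lam b')) :
    ∃ b m, StdSteps e (.lam b) ∧ ParN m b b' ∧ m < s := by
  obtain ⟨e₀, m, hs, hi, hle⟩ := h.exists_stdSteps_internal
  cases hi with
  | lam hb => exact ⟨_, _, hs, hb, by omega⟩

theorem ParN.exists_stdSteps_app {s : Nat} {e f' a' : Tm} (h : ParN s e (.app f' a')) :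
    ∃ f a m₁ m₂,
      StdSteps e (.app f a) ∧ ParN m₁ f f' ∧ ParN m₂ a a' ∧ m₁ + m₂ < s := by
  obtain ⟨e₀, m, hs, hi, hle⟩ := h.exists_stdSteps_internal
  cases hi with
  | app hf ha => exact ⟨_, _, _, _, hs, hf, ha, by omega⟩

/-- Here `F.plug (.bvar (F.depth + k))` is `F[x]` for a variable `x` bound `k` binders outside
`F`; the generalisation from `k = 0` is needed to pass under the binder of `appBody`. -/
theorem ParN.exists_stdSteps_plug_bvar {s k : Nat} {c : Tm} {F : ECtx}
    (h : ParN s c (F.plug (.bvar (F.depth + k)))) :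
    ∃ G : ECtx, StdSteps c (G.plug (.bvar (G.depth + k))) ∧
      Par (G.plug (.bvar (G.depth + k))) (F.plug (.bvar (F.depth + k))) := by
  induction s using Nat.strong_induction_on generalizing c F k with
  | _ s ih =>
  cases F with
  | hole => exact ⟨.hole, h.stdSteps_of_bvar, .refl _⟩
  | appL F _ =>
    obtain ⟨f, a, m₁, m₂, hs, hf, ha, hlt⟩ := h.exists_stdSteps_app
    obtain ⟨G, hsf, hpG⟩ := ih m₁ (by omega) hf
    exact ⟨.appL G a, hs.trans (hsf.appL a), hpG.app ⟨_, ha⟩⟩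
  | appNeed B F =>
    obtain ⟨f, a, m₁, m₂, hs, hf, ha, hlt⟩ := h.exists_stdSteps_app
    obtain ⟨b, mb, hsf, hb, hmb⟩ := hf.exists_stdSteps_lam
    obtain ⟨GB, hsb, hpB⟩ := ih mb (by omega) (F := B) (k := 0) hb
    obtain ⟨G, hsa, hpG⟩ := ih m₂ (by omega) ha
    exact ⟨.appNeed GB G, hs.trans ((hsf.appL a).trans ((hsb.appBody a).trans (hsa.appNeed GB))),
      hpB.lam.app hpG⟩
  | appBody F _ =>
    obtain ⟨f, a, m₁, m₂, hs, hf, ha, hlt⟩ := h.exists_stdSteps_app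
    obtain ⟨b, mb, hsf, hb, hmb⟩ := hf.exists_stdSteps_lam
    rw [ECtx.depth, Nat.add_assoc, Nat.add_comm 1 k] at hb ⊢
    obtain ⟨G, hsb, hpG⟩ := ih mb (by omega) hb
    refine ⟨.appBody G a, ?_, ?_⟩ <;> rw [ECtx.depth, Nat.add_assoc, Nat.add_comm 1 k]
    · exact hs.trans ((hsf.appL a).trans (hsb.appBody a))
    · exact hpG.lam.app ⟨_, ha⟩

theorem ParN.exists_stdSteps_app_lam_needed {s : Nat} {f : Tm} {E : ECtx}
    (h : ParN s f (.lam (E.plug (.bvar E.depth)))) (a : Tm) :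
    ∃ G : ECtx, StdSteps (.app f a) (.app (.lam (G.plug (.bvar G.depth))) a) ∧
      Par (G.plug (.bvar G.depth)) (E.plug (.bvar E.depth)) := by
  obtain ⟨b, m, hs, hb, -⟩ := h.exists_stdSteps_lam
  obtain ⟨G, hsb, hpG⟩ := hb.exists_stdSteps_plug_bvar (k := 0)
  exact ⟨G, (hs.appL a).trans (hsb.appBody a), hpG⟩

theorem Par.exists_stdSteps_answer {e A : Tm} (h : Par e A) (hA : IsAnswer A) :
    ∃ A₀, StdSteps e A₀ ∧ IsAnswer A₀ ∧ Par A₀ A := by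
  obtain ⟨s, h⟩ := h
  induction hA generalizing s e with
  | lam _ =>
    obtain ⟨b₀, m, hs, hb, -⟩ := h.exists_stdSteps_lam
    exact ⟨_, hs, .lam b₀, ⟨_, hb.lam⟩⟩
  | app _ _ ih =>
    obtain ⟨f, a, m₁, m₂, hs, hf, ha, -⟩ := h.exists_stdSteps_app
    obtain ⟨c, m, hsf, hc, -⟩ := hf.exists_stdSteps_lam
    obtain ⟨C, hsc, hC, hpC⟩ := ih _ hc
    exact ⟨_, hs.trans ((hsf.appL a).trans (hsc.appBody a)), .app a hC, hpC.lam.app ⟨_, ha⟩⟩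

theorem ParN.exists_stdSteps_app_lam_answer {s : Nat} {e A e' : Tm}
    (h : ParN s e (.app (.lam A) e')) (hA : IsAnswer A) :
    ∃ C e₀, StdSteps e (.app (.lam C) e₀) ∧ IsAnswer C ∧ Par C A ∧ Par e₀ e' := by
  obtain ⟨f, a, m₁, m₂, hs, hf, ha, -⟩ := h.exists_stdSteps_app
  obtain ⟨c, m, hsf, hc, -⟩ := hf.exists_stdSteps_lam
  obtain ⟨C, hsc, hC, hpC⟩ := Par.exists_stdSteps_answer ⟨_, hc⟩ hA
  exact ⟨C, a, hs.trans ((hsf.appL a).trans (hsc.appBody a)), hC, hpC, ⟨_, ha⟩⟩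

theorem ParN.commute_redn {s : Nat} {e e₁ e₂ : Tm} (h : ParN s e e₁) (hr : Redn e₁ e₂) :
    ∃ e₃, StdSteps e e₃ ∧ Par e₃ e₂ := by
  cases hr <;> obtain ⟨f, a, m₁, m₂, hs, hf, ha, -⟩ := h.exists_stdSteps_app
  case beta =>
    obtain ⟨G, hsf, ⟨_, hpG⟩⟩ := hf.exists_stdSteps_app_lam_needed a
    obtain ⟨d, m, hsa, hd, -⟩ := ha.exists_stdSteps_lam
    obtain ⟨_, -, hp⟩ := hpG.subst hd.lam 0
    exact ⟨_, hs.trans (hsf.trans ((hsa.appNeed G).tail (.of_redn (.beta G d)))), ⟨_, hp⟩⟩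
  case liftR hA =>
    obtain ⟨C, e₀, hsf, hC, hpC, hpe⟩ := hf.exists_stdSteps_app_lam_answer hA
    exact ⟨_, hs.trans ((hsf.appL a).tail (.of_redn (.liftR e₀ a hC))),
      (hpC.app (Par.lift ⟨_, ha⟩ 1 0)).lam.app hpe⟩
  case assoc hA =>
    obtain ⟨G, hsf, hpG⟩ := hf.exists_stdSteps_app_lam_needed a
    obtain ⟨D, e₀, hsa, hD, hpD, hpe⟩ := ha.exists_stdSteps_app_lam_answer hA
    exact ⟨_, hs.trans (hsf.trans ((hsa.appNeed G).tail (.of_redn (.assoc G e₀ hD)))),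
      ((hpG.lam.lift 1 0).app hpD).lam.app hpe⟩

theorem ParN.commute_stdStep {s : Nat} {e e₁ e₂ : Tm} (h : ParN s e e₁)
    (hst : StdStep e₁ e₂) :
    ∃ e₃, StdSteps e e₃ ∧ Par e₃ e₂ := by
  induction s using Nat.strong_induction_on generalizing e e₁ e₂ with
  | _ s ih =>
  obtain ⟨E, r, r', hr⟩ := hst
  cases E with
  | hole => exact h.commute_redn hr
  | appL E _ =>
    obtain ⟨f, a, m₁, m₂, hs, hf, ha, hlt⟩ := h.exists_stdSteps_app
    obtain ⟨f₃, hsf, hpf⟩ := ih m₁ (by omega) hf (.mk E r r' hr)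
    exact ⟨_, hs.trans (hsf.appL a), hpf.app ⟨_, ha⟩⟩
  | appNeed B E =>
    obtain ⟨f, a, m₁, m₂, hs, hf, ha, hlt⟩ := h.exists_stdSteps_app
    obtain ⟨G, hsf, hpG⟩ := hf.exists_stdSteps_app_lam_needed a
    obtain ⟨a₃, hsa, hpa⟩ := ih m₂ (by omega) ha (.mk E r r' hr)
    exact ⟨_, hs.trans (hsf.trans (hsa.appNeed G)), hpG.lam.app hpa⟩
  | appBody E _ =>
    obtain ⟨f, a, m₁, m₂, hs, hf, ha, hlt⟩ := h.exists_stdSteps_app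
    obtain ⟨c, m, hsf, hc, hm⟩ := hf.exists_stdSteps_lam
    obtain ⟨c₃, hsc, hpc⟩ := ih m (by omega) hc (.mk E r r' hr)
    exact ⟨_, hs.trans ((hsf.appL a).trans (hsc.appBody a)), hpc.lam.app ⟨_, ha⟩⟩

theorem Par.commute_stdSteps {e e₁ e₂ : Tm} (h : Par e e₁) (hs : StdSteps e₁ e₂) :
    ∃ e₃, StdSteps e e₃ ∧ Par e₃ e₂ := by
  induction hs using Relation.ReflTransGen.head_induction_on generalizing e with
  | refl => exact ⟨e, .refl, h⟩
  | head hst _ ih =>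
    obtain ⟨_, h⟩ := h
    obtain ⟨e₃, hs₃, hp₃⟩ := h.commute_stdStep hst
    obtain ⟨e₄, hs₄, hp₄⟩ := ih hp₃
    exact ⟨e₄, hs₃.trans hs₄, hp₄⟩

/-- a Curry–Feys-style standard reduction theorem for the
    revised call-by-need λ-calculus: if a term reduces to an answer by
    arbitrary reductions, the standard reduction sequence also reaches an
    answer. -/
theorem standard_reduction (e a : Tm) (h : Reds e a) (ha : IsAnswer a) :
    ∃ a', Relation.ReflTransGen StdStep e a' ∧ IsAnswer a' := by
  induction h using Relation.ReflTransGen.head_induction_on with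
  | refl => exact ⟨a, .refl, ha⟩
  | head hstep _ ih =>
    obtain ⟨a₁, hs₁, ha₁⟩ := ih
    obtain ⟨e₂, hs₂, hp₂⟩ := hstep.par.commute_stdSteps hs₁
    obtain ⟨a₂, hs₃, ha₂, -⟩ := hp₂.exists_stdSteps_answer ha₁
    exact ⟨a₂, hs₂.trans hs₃, ha₂⟩

end NeedCalc
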